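/- Let C be a d-clutter on a finite vertex set V with C not complete, let Γ = ⟨C^∨⟩, and let v ∈ V. Then Facets(link_Γ(v)) = (C − v)^∨, where (C − v)^∨ is computed on the vertex set V \ {v}; equivalently, ⟨(C − v)^∨⟩ = link_Γ(v). -/

import Mathlib

namespace ClutterPaper

variable {α : Type*} [DecidableEq α]

/-- `C` is a uniform clutter on vertex set `V` all of whose circuits have cardinality `c`
(i.e. a `(c-1)`-dimensional uniform clutter). -/
def IsClutter (V : Finset α) (c : ℕ) (C : Finset (Finset α)) : Prop :=
  ∀ F ∈ C, F ⊆ V ∧ F.card = c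

/-- The complement clutter `C̄`: all `c`-subsets of `V` not in `C`. -/
def compClutter (V : Finset α) (c : ℕ) (C : Finset (Finset α)) : Finset (Finset α) :=
  V.powersetCard c \ C

/-- `C^∨ = { V \ F | F ∈ C̄ }`. -/
def clutterDual (V : Finset α) (c : ℕ) (C : Finset (Finset α)) : Finset (Finset α) :=
  (compClutter V c C).image fun F => V \ F

/-- `A` is a clique of the clutter `C` (with circuit cardinality `c`) on vertex set `V`:
all `c`-subsets of `A` are circuits. -/
def IsClique (V : Finset α) (c : ℕ) (C : Finset (Finset α)) (A : Finset α) : Prop :=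
  A ⊆ V ∧ ∀ F ⊆ A, F.card = c → F ∈ C

/-- The closed neighborhood `N_C[e] = e ∪ { v ∈ V | e ∪ {v} ∈ C }`. -/
def closedNbhd (V : Finset α) (C : Finset (Finset α)) (e : Finset α) : Finset α :=
  e ∪ V.filter fun v => insert v e ∈ C

/-- `e` is a maximal subcircuit of the clutter `C` with circuit cardinality `c`:
`e` has cardinality `c - 1` and is contained in some circuit. -/
def IsMS (c : ℕ) (C : Finset (Finset α)) (e : Finset α) : Prop :=
  e.card + 1 = c ∧ ∃ F ∈ C, e ⊆ F

/-- `e` is a simplicial maximal subcircuit: a maximal subcircuit whose closed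
neighborhood is a clique. -/
def IsSMS (V : Finset α) (c : ℕ) (C : Finset (Finset α)) (e : Finset α) : Prop :=
  IsMS c C e ∧ IsClique V c C (closedNbhd V C e)

/-- `e` is a free maximal subcircuit: contained in exactly one circuit. -/
def IsFreeMS (c : ℕ) (C : Finset (Finset α)) (e : Finset α) : Prop :=
  e.card + 1 = c ∧ ∃! F, F ∈ C ∧ e ⊆ F

/-- Deletion `C − e` of a maximal subcircuit: the circuits not containing `e`. -/
def delMS (C : Finset (Finset α)) (e : Finset α) : Finset (Finset α) :=
  C.filter fun F => ¬ e ⊆ F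

/-- Deletion of a vertex: circuits (or faces) not containing `v`. -/
def delVert (C : Finset (Finset α)) (v : α) : Finset (Finset α) :=
  C.filter fun F => v ∉ F

/-- Chordality of a uniform clutter (circuit cardinality `c`) on `V`: there is a sequence of
deletions of simplicial maximal subcircuits ending in the clutter with no circuits. -/
inductive Chordal (V : Finset α) (c : ℕ) : Finset (Finset α) → Prop
  | empty : Chordal V c ∅
  | step {C : Finset (Finset α)} (e : Finset α) :
      IsSMS V c C e → Chordal V c (delMS C e) → Chordal V c C

/-- The ascent `C⁺` of a clutter with circuit cardinality `c`: all `(c+1)`-subsets of `V`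
that are cliques of `C`. -/
def ascent (V : Finset α) (c : ℕ) (C : Finset (Finset α)) : Finset (Finset α) :=
  (V.powersetCard (c + 1)).filter fun A => A.powersetCard c ⊆ C

/-- The simplicial complex `⟨D⟩` generated by a clutter `D`: all subsets of its elements. -/
def complexOf (D : Finset (Finset α)) : Finset (Finset α) :=
  D.biUnion Finset.powerset

/-- A family of finsets is a simplicial complex if it is downward closed. -/
def IsComplex (Δ : Finset (Finset α)) : Prop :=
  ∀ F ∈ Δ, ∀ G ⊆ F, G ∈ Δ

/-- The facets (maximal faces) of a simplicial complex. -/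
def facets (Δ : Finset (Finset α)) : Finset (Finset α) :=
  Δ.filter fun F => ∀ G ∈ Δ, F ⊆ G → F = G

/-- `link_Δ(v) = { F \ {v} | v ∈ F ∈ Δ }`. -/
def link (Δ : Finset (Finset α)) (v : α) : Finset (Finset α) :=
  (Δ.filter fun F => v ∈ F).image fun F => F.erase v

/-- `v` is a shedding vertex of `Δ`: no face of `link_Δ(v)` is a facet of `Δ − v`. -/
def Shedding (Δ : Finset (Finset α)) (v : α) : Prop :=
  ∀ F ∈ link Δ v, F ∉ facets (delVert Δ v)

/-- Alexander dual of a simplicial complex on vertex set `V`: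
`Δ^∨ = { V \ F | F ⊆ V, F ∉ Δ }`. -/
def alexDual (V : Finset α) (Δ : Finset (Finset α)) : Finset (Finset α) :=
  (V.powerset.filter fun F => F ∉ Δ).image fun F => V \ F

/-- `Δ` is pure with all facets of cardinality `c` (dimension `c - 1`), and nonempty. -/
def PureDim (Δ : Finset (Finset α)) (c : ℕ) : Prop :=
  Δ.Nonempty ∧ ∀ F ∈ facets Δ, F.card = c

/-- Vertex decomposability of a simplicial complex. -/
inductive VDecomp : Finset (Finset α) → Prop
  | simplex {Δ : Finset (Finset α)} : (facets Δ).card = 1 → VDecomp Δ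
  | shed {Δ : Finset (Finset α)} (v : α) : Shedding Δ v →
      VDecomp (link Δ v) → VDecomp (delVert Δ v) → VDecomp Δ

/-- The vertex set of a clutter (or of the complex it generates). -/
def vertexSet (Ω : Finset (Finset α)) : Finset α :=
  Ω.biUnion id

/-- `Ω` (given by its set of facets, each of cardinality `d+1`) is a `d`-cycle:
nonempty, pure of dimension `d`, `d`-path connected, and every `(d-1)`-dimensional
face lies in an even number of `d`-faces. -/
def IsCycle (d : ℕ) (Ω : Finset (Finset α)) : Prop :=
  Ω.Nonempty ∧ (∀ F ∈ Ω, F.card = d + 1) ∧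
    (∀ F ∈ Ω, ∀ G ∈ Ω,
      Relation.ReflTransGen (fun A B => A ∈ Ω ∧ B ∈ Ω ∧ (A ∩ B).card = d) F G) ∧
    ∀ e : Finset α, e.card = d → Even ((Ω.filter fun F => e ⊆ F).card)

/-- A face-minimal `d`-cycle: no `d`-cycle has a strictly smaller set of `d`-faces. -/
def FaceMinimalCycle (d : ℕ) (Ω : Finset (Finset α)) : Prop :=
  IsCycle d Ω ∧ ∀ Ω' : Finset (Finset α), IsCycle d Ω' → Ω' ⊆ Ω → Ω' = Ω

/-- `Ω` is `d`-complete: it contains every `(d+1)`-subset of its vertex set. -/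
def DComplete (d : ℕ) (Ω : Finset (Finset α)) : Prop :=
  ∀ F ⊆ vertexSet Ω, F.card = d + 1 → F ∈ Ω

/-- The complex `⟨C⟩` generated by the `d`-dimensional clutter `C` is `d`-chorded. -/
def Chorded (d : ℕ) (C : Finset (Finset α)) : Prop :=
  ∀ Ω : Finset (Finset α), FaceMinimalCycle d Ω → Ω ⊆ C → ¬ DComplete d Ω →
    ∃ (k : ℕ) (Ωs : Fin k → Finset (Finset α)), 2 ≤ k ∧
      (∀ i, IsCycle d (Ωs i) ∧ Ωs i ⊆ C) ∧
      (∀ F ∈ Ω, ∃ i, F ∈ Ωs i) ∧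
      (∀ F ∈ Ω, Odd ((Finset.univ.filter fun i => F ∈ Ωs i).card)) ∧
      (∀ F : Finset α, (∃ i, F ∈ Ωs i) → F ∉ Ω →
        Even ((Finset.univ.filter fun i => F ∈ Ωs i).card)) ∧
      ∀ i, vertexSet (Ωs i) ⊂ vertexSet Ω

/-- The circuits of `D` admit an admissible order. -/
def HasAdmissibleOrder (D : Finset (Finset α)) : Prop :=
  ∃ (t : ℕ) (F : Fin t → Finset α), Function.Injective F ∧
    (∀ G, G ∈ D ↔ ∃ i, F i = G) ∧
    ∀ i j : Fin t, j < i →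
      ∃ l ∈ F j \ F i, ∃ k : Fin t, k < i ∧ F k \ F i = {l}

/-- Contraction `D/v` of a (not necessarily uniform) clutter: the minimal sets of
`{ e \ {v} | e ∈ D }`. -/
def contractAux (D : Finset (Finset α)) (v : α) : Finset (Finset α) :=
  D.image fun e => e.erase v

def contract (D : Finset (Finset α)) (v : α) : Finset (Finset α) :=
  (contractAux D v).filter fun e => ∀ f ∈ contractAux D v, f ⊆ e → f = e

/-- `D` has a simplicial vertex (trivially true if `D` has no vertices). -/
def HasSimpVertex (D : Finset (Finset α)) : Prop :=
  vertexSet D = ∅ ∨ ∃ v ∈ vertexSet D, ∀ e₁ ∈ D, ∀ e₂ ∈ D, v ∈ e₁ → v ∈ e₂ →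
    ∃ e₃ ∈ D, e₃ ⊆ (e₁ ∪ e₂).erase v

/-- `D` is W-chordal: every clutter obtained from `D` by a sequence of vertex deletions
and contractions has a simplicial vertex. -/
def WChordal (D : Finset (Finset α)) : Prop :=
  ∀ D' : Finset (Finset α),
    Relation.ReflTransGen (fun X Y => ∃ v, Y = delVert X v ∨ Y = contract X v) D D' →
    HasSimpVertex D'

/-! Taking the link at `v` commutes with generating a complex, and the link of the dual
clutter at `v ∈ V` is the dual of `C − v` on `V \ {v}`, because the complement clutter
commutes with deleting `v`. The dual is uniform, so it is exactly the facet set of the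
complex it generates. -/

@[simp]
lemma mem_complexOf {D : Finset (Finset α)} {G : Finset α} :
    G ∈ complexOf D ↔ ∃ F ∈ D, G ⊆ F := by
  simp [complexOf]

lemma facets_complexOf_of_isAntichain {D : Finset (Finset α)}
    (hD : IsAntichain (· ⊆ ·) (D : Set (Finset α))) : facets (complexOf D) = D := by
  ext F
  simp only [facets, Finset.mem_filter, mem_complexOf]
  constructor
  · rintro ⟨⟨K, hK, hFK⟩, hmax⟩
    rwa [hmax K ⟨K, hK, subset_rfl⟩ hFK]
  · intro hF
    refine ⟨⟨F, hF, subset_rfl⟩, fun G ⟨K, hK, hGK⟩ hFG => ?_⟩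
    have hFK : F = K := hD.eq hF hK (hFG.trans hGK)
    exact hFG.antisymm (hFK ▸ hGK)

lemma link_complexOf (D : Finset (Finset α)) (v : α) :
    link (complexOf D) v = complexOf (link D v) := by
  ext G
  simp only [link, mem_complexOf, Finset.mem_image, Finset.mem_filter]
  constructor
  · rintro ⟨H, ⟨⟨F, hF, hHF⟩, hvH⟩, rfl⟩
    exact ⟨F.erase v, ⟨F, ⟨hF, hHF hvH⟩, rfl⟩, Finset.erase_subset_erase v hHF⟩
  · rintro ⟨_, ⟨F, ⟨hF, hvF⟩, rfl⟩, hGF⟩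
    have hvG : v ∉ G := fun h => Finset.notMem_erase v F (hGF h)
    refine ⟨insert v G, ⟨⟨F, hF, ?_⟩, Finset.mem_insert_self v G⟩, Finset.erase_insert hvG⟩
    exact Finset.insert_subset hvF (hGF.trans (Finset.erase_subset v F))

lemma compClutter_erase_delVert (V : Finset α) (c : ℕ) (C : Finset (Finset α)) (v : α) :
    compClutter (V.erase v) c (delVert C v) = delVert (compClutter V c C) v := by
  ext F
  simp only [compClutter, delVert, Finset.mem_sdiff, Finset.mem_filter,
    Finset.mem_powersetCard, Finset.subset_erase]
  tauto

lemma link_clutterDual {V : Finset α} (c : ℕ) (C : Finset (Finset α)) {v : α} (hv : v ∈ V) :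
    link (clutterDual V c C) v = clutterDual (V.erase v) c (delVert C v) := by
  rw [clutterDual, clutterDual, compClutter_erase_delVert, link, delVert,
    Finset.filter_image, Finset.image_image]
  congr 1
  · funext F
    exact (Finset.erase_sdiff_comm V F v).symm
  · exact Finset.filter_congr fun F _ => by simp [hv]

lemma sized_clutterDual (V : Finset α) (c : ℕ) (C : Finset (Finset α)) :
    (clutterDual V c C : Set (Finset α)).Sized (V.card - c) := by
  intro G hG
  simp only [clutterDual, compClutter, Finset.coe_image, Set.mem_image, Finset.mem_coe,
    Finset.mem_sdiff, Finset.mem_powersetCard] at hG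
  obtain ⟨F, ⟨⟨hFV, rfl⟩, -⟩, rfl⟩ := hG
  exact Finset.card_sdiff_of_subset hFV

theorem facets_link_dual_eq_general (V : Finset α) (d : ℕ) (C : Finset (Finset α))
    (v : α) (hv : v ∈ V) :
    facets (link (complexOf (clutterDual V (d + 1) C)) v) =
        clutterDual (V.erase v) (d + 1) (delVert C v) ∧
      complexOf (clutterDual (V.erase v) (d + 1) (delVert C v)) =
        link (complexOf (clutterDual V (d + 1) C)) v := by
  have hlink : link (complexOf (clutterDual V (d + 1) C)) v =
      complexOf (clutterDual (V.erase v) (d + 1) (delVert C v)) := by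
    rw [link_complexOf, link_clutterDual _ _ hv]
  refine ⟨?_, hlink.symm⟩
  rw [hlink]
  exact facets_complexOf_of_isAntichain (sized_clutterDual _ _ _).isAntichain

/-- For a non-complete `d`-clutter `C` on `V`, `Γ = ⟨C^∨⟩` and `v ∈ V`:
`Facets(link_Γ(v)) = (C − v)^∨` (computed on `V \ {v}`), and equivalently
`⟨(C − v)^∨⟩ = link_Γ(v)`. -/
theorem facets_link_dual_eq (V : Finset α) (d : ℕ) (C : Finset (Finset α))
    (hC : IsClutter V (d + 1) C) (hnc : C ≠ V.powersetCard (d + 1))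
    (v : α) (hv : v ∈ V) :
    facets (link (complexOf (clutterDual V (d + 1) C)) v) =
        clutterDual (V.erase v) (d + 1) (delVert C v) ∧
      complexOf (clutterDual (V.erase v) (d + 1) (delVert C v)) =
        link (complexOf (clutterDual V (d + 1) C)) v :=
  facets_link_dual_eq_general V d C v hv

end ClutterPaper
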